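/- arXiv:2411.02740 — 5 statements merged into one kernel-verified Lean document; each statement's English description precedes it below -/
import Mathlib

section
/- Let Σ be a real symmetric positive definite k×k matrix and A a real k×r matrix such that Aᵀ Σ⁻¹ A is invertible. Then A (Aᵀ Σ⁻¹ A)⁻¹ Aᵀ ⪯ Σ, i.e., Σ − A (Aᵀ Σ⁻¹ A)⁻¹ Aᵀ is positive semidefinite. -/
open Matrix

/-- Let `Σ` be a real symmetric positive definite `k×k` matrix and `A` a real `k×r`
matrix such that `Aᵀ Σ⁻¹ A` is invertible. Then `A (Aᵀ Σ⁻¹ A)⁻¹ Aᵀ ⪯ Σ`,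
i.e. `Σ - A (Aᵀ Σ⁻¹ A)⁻¹ Aᵀ` is positive semidefinite. -/
theorem conj_inv_gram_le_cov {k r : ℕ} (S : Matrix (Fin k) (Fin k) ℝ) (hS : S.PosDef)
    (A : Matrix (Fin k) (Fin r) ℝ) (hA : IsUnit (Aᵀ * S⁻¹ * A)) :
    (S - A * (Aᵀ * S⁻¹ * A)⁻¹ * Aᵀ).PosSemidef := by
  set G := Aᵀ * S⁻¹ * A with hG
  have hSsymm : Sᵀ = S := hS.1
  have hSinv_symm : (S⁻¹)ᵀ = S⁻¹ := by
    have h := Matrix.transpose_nonsing_inv S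
    rw [hSsymm] at h; exact h
  have hGsymm : Gᵀ = G := by
    rw [hG, Matrix.transpose_mul, Matrix.transpose_mul, Matrix.transpose_transpose,
      hSinv_symm, Matrix.mul_assoc]
  have hGinv_symm : (G⁻¹)ᵀ = G⁻¹ := by
    have h := Matrix.transpose_nonsing_inv G
    rw [hGsymm] at h; exact h
  have hGdet : IsUnit G.det := (Matrix.isUnit_iff_isUnit_det G).mp hA
  have hGinvG : G⁻¹ * G = 1 := Matrix.nonsing_inv_mul G hGdet
  have hSdet : IsUnit S.det := hS.det_pos.ne'.isUnit
  have hSSinv : S * S⁻¹ = 1 := Matrix.mul_nonsing_inv S hSdet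
  set C : Matrix (Fin k) (Fin k) ℝ := 1 - S⁻¹ * A * G⁻¹ * Aᵀ with hC
  have key : S - A * G⁻¹ * Aᵀ = Cᴴ * S * C := by
    have hCH : Cᴴ = 1 - A * G⁻¹ * Aᵀ * S⁻¹ := by
      simp [hC, Matrix.conjTranspose_eq_transpose_of_trivial, Matrix.transpose_sub,
        Matrix.transpose_mul, hSinv_symm, hGinv_symm, Matrix.mul_assoc]
    rw [hCH, hC]
    have e1 : (1 - A * G⁻¹ * Aᵀ * S⁻¹) * S = S - A * G⁻¹ * Aᵀ := by
      rw [Matrix.sub_mul, Matrix.one_mul, Matrix.mul_assoc (A * G⁻¹ * Aᵀ),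
        Matrix.nonsing_inv_mul S hSdet, Matrix.mul_one]
    rw [e1, Matrix.mul_sub, Matrix.mul_one, Matrix.sub_mul]
    have e3 : S * (S⁻¹ * A * G⁻¹ * Aᵀ) = A * G⁻¹ * Aᵀ := by
      simp only [← Matrix.mul_assoc, hSSinv, Matrix.one_mul]
    have e2 : (A * G⁻¹ * Aᵀ) * (S⁻¹ * A * G⁻¹ * Aᵀ) = A * G⁻¹ * Aᵀ := by
      have h4 : A * G⁻¹ * Aᵀ * (S⁻¹ * A * G⁻¹ * Aᵀ)
          = A * (G⁻¹ * (Aᵀ * S⁻¹ * A) * G⁻¹) * Aᵀ := by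
        simp only [Matrix.mul_assoc]
      rw [h4, ← hG, hGinvG, Matrix.one_mul]
    rw [e3, e2, sub_self, sub_zero]
  rw [key]
  exact hS.posSemidef.conjTranspose_mul_mul_same C
end

section
/- Let I be a real symmetric positive definite n×n matrix, Σ a real symmetric positive definite k×k matrix, and G a real k×n matrix. If I ⪰ Gᵀ Σ⁻¹ G (i.e., I − Gᵀ Σ⁻¹ G is positive semidefinite), then G I⁻¹ Gᵀ ⪯ Σ, i.e., Σ − G I⁻¹ Gᵀ is positive semidefinite. -/
open Matrix

/-- Let `I` be a real symmetric positive definite `n×n` matrix, `Σ` a real symmetric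
positive definite `k×k` matrix, and `G` a real `k×n` matrix. If `I ⪰ Gᵀ Σ⁻¹ G`,
then `G I⁻¹ Gᵀ ⪯ Σ`, i.e. `Σ - G I⁻¹ Gᵀ` is positive semidefinite. -/
theorem propagated_cov_le_target_of_fim_ge {n k : ℕ}
    (I : Matrix (Fin n) (Fin n) ℝ) (hI : I.PosDef)
    (S : Matrix (Fin k) (Fin k) ℝ) (hS : S.PosDef)
    (G : Matrix (Fin k) (Fin n) ℝ)
    (hIJ : (I - Gᵀ * S⁻¹ * G).PosSemidef) :
    (S - G * I⁻¹ * Gᵀ).PosSemidef := by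
  have := hI.isUnit.invertible
  have := hS.isUnit.invertible
  -- Both matrices are Schur complements of `[[S, G], [Gᵀ, I]]`; each one is positive
  -- semidefinite exactly when that block matrix is.
  have hblock : (fromBlocks S G Gᵀ I).PosSemidef := by
    rwa [← conjTranspose_eq_transpose_of_trivial, PosDef.fromBlocks₁₁ G I hS]
  rwa [← conjTranspose_eq_transpose_of_trivial, PosDef.fromBlocks₂₂ S G hI] at hblock
end

section
/- Let I be a real symmetric positive semidefinite n×n matrix, Σ a real symmetric positive definite k×k matrix, and G a real k×n matrix with I ⪰ Gᵀ Σ⁻¹ G. Let V₁ be a real n×r matrix with orthonormal columns (V₁ᵀ V₁ = 1) whose column space equals the column space of I. Then V₁ᵀ I V₁ is positive definite, and G V₁ (V₁ᵀ I V₁)⁻¹ V₁ᵀ Gᵀ ⪯ Σ, i.e., Σ − G V₁ (V₁ᵀ I V₁)⁻¹ V₁ᵀ Gᵀ is positive semidefinite. -/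
open Matrix
open scoped ComplexOrder

/-!
The compression `A = V₁ᵀ I V₁` is definite: if `xᵀ A x = 0` then `I (V₁ x) = 0`, while `V₁ x`
lies in the range of `I`, and for a symmetric matrix range and kernel meet only in `0`.
Compressing `I ⪰ Gᵀ Σ⁻¹ G` by `V₁` gives `A ⪰ Bᵀ Σ⁻¹ B` with `B = G V₁`. By the two Schur
complement criteria, this inequality and the claim `Σ ⪰ B A⁻¹ Bᵀ` both say that the block matrix
`[[Σ, B], [Bᵀ, A]]` is positive semidefinite.
-/

namespace Matrix

variable {m n 𝕜 : Type*} [Fintype m] [Fintype n] [RCLike 𝕜]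

theorem IsHermitian.disjoint_range_ker {A : Matrix n n 𝕜} (hA : A.IsHermitian) :
    Disjoint (LinearMap.range A.mulVecLin) (LinearMap.ker A.mulVecLin) := by
  rw [Submodule.disjoint_def]
  rintro _ ⟨w, rfl⟩ (hAAw : A *ᵥ (A *ᵥ w) = 0)
  change A *ᵥ w = 0
  rw [← dotProduct_star_self_eq_zero]
  calc star (A *ᵥ w) ⬝ᵥ A *ᵥ w = star w ⬝ᵥ A *ᵥ (A *ᵥ w) := by
        rw [star_mulVec, ← dotProduct_mulVec, hA.eq]
    _ = 0 := by rw [hAAw, dotProduct_zero]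

theorem PosSemidef.posDef_conjTranspose_mul_mul_of_range_le {A : Matrix n n 𝕜}
    (hA : A.PosSemidef) {B : Matrix n m 𝕜} (hB : Function.Injective B.mulVec)
    (hBA : LinearMap.range B.mulVecLin ≤ LinearMap.range A.mulVecLin) :
    (Bᴴ * A * B).PosDef := by
  refine .of_dotProduct_mulVec_pos (hA.conjTranspose_mul_mul_same B).1 fun x hx => ?_
  have hquad : star x ⬝ᵥ (Bᴴ * A * B) *ᵥ x = star (B *ᵥ x) ⬝ᵥ A *ᵥ (B *ᵥ x) := by
    rw [← mulVec_mulVec, ← mulVec_mulVec, dotProduct_mulVec, star_mulVec]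
  rw [hquad]
  refine lt_of_le_of_ne (hA.dotProduct_mulVec_nonneg _) fun h0 => hx (hB ?_)
  have hker : B *ᵥ x ∈ LinearMap.ker A.mulVecLin := (hA.dotProduct_mulVec_zero_iff _).mp h0.symm
  have hBx := Submodule.disjoint_def.mp hA.1.disjoint_range_ker _ (hBA ⟨x, rfl⟩) hker
  exact hBx.trans (mulVec_zero B).symm

theorem PosSemidef.sub_mul_inv_mul_conjTranspose_of_sub [DecidableEq m] [DecidableEq n]
    {S : Matrix m m 𝕜} {A : Matrix n n 𝕜} {B : Matrix m n 𝕜} (hS : S.PosDef) (hA : A.PosDef)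
    (hSchur : (A - Bᴴ * S⁻¹ * B).PosSemidef) :
    (S - B * A⁻¹ * Bᴴ).PosSemidef := by
  have := hS.isUnit.invertible
  have := hA.isUnit.invertible
  exact (PosDef.fromBlocks₂₂ S B hA).mp ((PosDef.fromBlocks₁₁ B A hS).mpr hSchur)

end Matrix

/-- Let `I` be a real symmetric positive semidefinite `n×n` matrix, `Σ` a real symmetric
positive definite `k×k` matrix, and `G` a real `k×n` matrix with `I ⪰ Gᵀ Σ⁻¹ G`.
Let `V₁` be a real `n×r` matrix with orthonormal columns whose column space equals the
column space of `I`. Then `V₁ᵀ I V₁` is positive definite and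
`G V₁ (V₁ᵀ I V₁)⁻¹ V₁ᵀ Gᵀ ⪯ Σ`. -/
theorem restricted_propagated_cov_le_target {n k r : ℕ}
    (I : Matrix (Fin n) (Fin n) ℝ) (hI : I.PosSemidef)
    (S : Matrix (Fin k) (Fin k) ℝ) (hS : S.PosDef)
    (G : Matrix (Fin k) (Fin n) ℝ)
    (hIJ : (I - Gᵀ * S⁻¹ * G).PosSemidef)
    (V₁ : Matrix (Fin n) (Fin r) ℝ) (hV : V₁ᵀ * V₁ = 1)
    (hrange : LinearMap.range V₁.mulVecLin = LinearMap.range I.mulVecLin) :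
    (V₁ᵀ * I * V₁).PosDef ∧
      (S - G * V₁ * (V₁ᵀ * I * V₁)⁻¹ * V₁ᵀ * Gᵀ).PosSemidef := by
  have hinj : Function.Injective V₁.mulVec := fun x y hxy => by
    simpa [mulVec_mulVec, hV] using congrArg (V₁ᵀ *ᵥ ·) hxy
  have hpos : (V₁ᵀ * I * V₁).PosDef := by
    simpa [conjTranspose_eq_transpose_of_trivial] using
      hI.posDef_conjTranspose_mul_mul_of_range_le hinj hrange.le
  refine ⟨hpos, ?_⟩
  have hSchur : (V₁ᵀ * I * V₁ - (G * V₁)ᴴ * S⁻¹ * (G * V₁)).PosSemidef := by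
    simpa [conjTranspose_eq_transpose_of_trivial, Matrix.mul_sub, Matrix.sub_mul,
      Matrix.mul_assoc] using hIJ.conjTranspose_mul_mul_same V₁
  simpa [conjTranspose_eq_transpose_of_trivial, Matrix.mul_assoc] using
    hSchur.sub_mul_inv_mul_conjTranspose_of_sub hS hpos
end

section
/- Let I be a real symmetric positive definite n×n matrix, Σ a real symmetric positive definite k×k matrix, G a real k×n matrix with I ⪰ Gᵀ Σ⁻¹ G, and let C be a real symmetric positive semidefinite n×n matrix with C ⪯ I⁻¹ (i.e., I⁻¹ − C is positive semidefinite). Then G C Gᵀ ⪯ Σ, i.e., Σ − G C Gᵀ is positive semidefinite. -/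
open Matrix

/-!
Both `I - Gᵀ Σ⁻¹ G` and `Σ - G I⁻¹ Gᵀ` are Schur complements of the block matrix
`[[Σ, G], [Gᵀ, I]]`, so one is positive semidefinite exactly when the other is. Hence
`G I⁻¹ Gᵀ ⪯ Σ`, and congruence by `G` carries `C ⪯ I⁻¹` over to `G C Gᵀ ⪯ G I⁻¹ Gᵀ`.
-/

namespace Matrix

variable {m n R : Type*} [Fintype m] [Fintype n] [CommRing R] [PartialOrder R] [StarRing R]

theorem PosSemidef.sub_mul_inv_mul_conjTranspose_of_sub_conjTranspose_mul_inv_mul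
    [DecidableEq m] [DecidableEq n] [StarOrderedRing R]
    {A : Matrix m m R} {D : Matrix n n R} (hA : A.PosDef) (hD : D.PosDef)
    [Invertible A] [Invertible D] {B : Matrix m n R}
    (h : (D - Bᴴ * A⁻¹ * B).PosSemidef) : (A - B * D⁻¹ * Bᴴ).PosSemidef :=
  (PosDef.fromBlocks₂₂ A B hD).mp ((PosDef.fromBlocks₁₁ B D hA).mpr h)

theorem PosSemidef.mul_sub_mul_conjTranspose {A A' : Matrix n n R}
    (h : (A - A').PosSemidef) (G : Matrix m n R) :
    (G * A * Gᴴ - G * A' * Gᴴ).PosSemidef := by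
  simpa only [Matrix.mul_sub, Matrix.sub_mul] using h.mul_mul_conjTranspose_same G

end Matrix

theorem cov_propagation_le_target_general {n k : ℕ}
    (I : Matrix (Fin n) (Fin n) ℝ) (hI : I.PosDef)
    (S : Matrix (Fin k) (Fin k) ℝ) (hS : S.PosDef)
    (G : Matrix (Fin k) (Fin n) ℝ)
    (hIJ : (I - Gᵀ * S⁻¹ * G).PosSemidef)
    (C : Matrix (Fin n) (Fin n) ℝ)
    (hCR : (I⁻¹ - C).PosSemidef) :
    (S - G * C * Gᵀ).PosSemidef := by
  have : Invertible I := hI.isUnit.invertible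
  have : Invertible S := hS.isUnit.invertible
  rw [← conjTranspose_eq_transpose_of_trivial] at hIJ ⊢
  have hTarget : (S - G * I⁻¹ * Gᴴ).PosSemidef :=
    .sub_mul_inv_mul_conjTranspose_of_sub_conjTranspose_mul_inv_mul hS hI hIJ
  have hPropagated : (G * I⁻¹ * Gᴴ - G * C * Gᴴ).PosSemidef := hCR.mul_sub_mul_conjTranspose G
  simpa only [sub_add_sub_cancel] using hTarget.add hPropagated

/-- Let `I` be a real symmetric positive definite `n×n` matrix, `Σ` a real symmetric
positive definite `k×k` matrix, `G` a real `k×n` matrix with `I ⪰ Gᵀ Σ⁻¹ G`, and `C`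
a real symmetric positive semidefinite `n×n` matrix with `C ⪯ I⁻¹`.
Then `G C Gᵀ ⪯ Σ`. -/
theorem cov_propagation_le_target {n k : ℕ}
    (I : Matrix (Fin n) (Fin n) ℝ) (hI : I.PosDef)
    (S : Matrix (Fin k) (Fin k) ℝ) (hS : S.PosDef)
    (G : Matrix (Fin k) (Fin n) ℝ)
    (hIJ : (I - Gᵀ * S⁻¹ * G).PosSemidef)
    (C : Matrix (Fin n) (Fin n) ℝ) (hC : C.PosSemidef)
    (hCR : (I⁻¹ - C).PosSemidef) :
    (S - G * C * Gᵀ).PosSemidef :=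
  cov_propagation_le_target_general I hI S hS G hIJ C hCR
end

section
/- Let Σ be a real symmetric positive definite k×k matrix, A a real k×r matrix with Aᵀ Σ⁻¹ A invertible, and M a real symmetric positive definite r×r matrix with M ⪰ Aᵀ Σ⁻¹ A. Then A M⁻¹ Aᵀ ⪯ A (Aᵀ Σ⁻¹ A)⁻¹ Aᵀ ⪯ Σ; that is, both A (Aᵀ Σ⁻¹ A)⁻¹ Aᵀ − A M⁻¹ Aᵀ and Σ − A (Aᵀ Σ⁻¹ A)⁻¹ Aᵀ are positive semidefinite. -/
/-!
Both inequalities are read off Schur complements. Inversion is antitone on positive definite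
matrices: if `G ≤ M`, the block matrix `[[M, 1], [1, G⁻¹]]` has complement `M - G ≥ 0` with respect
to `G⁻¹`, hence is positive semidefinite, hence so is its complement `G⁻¹ - M⁻¹` with respect to
`M`; conjugating by `A` gives the first inequality. For the second, with `G = Aᵀ Σ⁻¹ A` the block
matrix `[[Σ, A], [Aᵀ, G]]` has complement `0` with respect to `Σ`, so its complement
`Σ - A G⁻¹ Aᵀ` with respect to `G` is positive semidefinite.
-/

open Matrix

namespace Matrix.PosDef

variable {m n K : Type*} [Fintype m] [Fintype n] [DecidableEq m] [DecidableEq n]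
  [Field K] [PartialOrder K] [StarRing K]

theorem conjTranspose_mul_inv_mul_of_isUnit {S : Matrix m m K} (hS : S.PosDef)
    {A : Matrix m n K} (hA : IsUnit (Aᴴ * S⁻¹ * A)) : (Aᴴ * S⁻¹ * A).PosDef := by
  have hinj : Function.Injective A.mulVec := by
    refine Function.Injective.of_comp (f := (Aᴴ * S⁻¹).mulVec) ?_
    simpa only [Function.comp_def, mulVec_mulVec] using mulVec_injective_iff_isUnit.mpr hA
  exact hS.inv.conjTranspose_mul_mul_same hinj

variable [StarOrderedRing K]

theorem posSemidef_inv_sub_inv {A B : Matrix n n K} (hA : A.PosDef)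
    (hAB : (B - A).PosSemidef) : (A⁻¹ - B⁻¹).PosSemidef := by
  have hB : B.PosDef := add_sub_cancel A B ▸ hA.add_posSemidef hAB
  have hAinv : A⁻¹.PosDef := hA.inv
  let _ := hB.isUnit.invertible
  let _ := hAinv.isUnit.invertible
  let _ := hA.isUnit.invertible
  have hblock := (fromBlocks₂₂ B 1 hAinv).mpr (by
    simpa only [conjTranspose_one, one_mul, mul_one, inv_inv_of_invertible] using hAB)
  simpa only [conjTranspose_one, one_mul, mul_one] using (fromBlocks₁₁ 1 A⁻¹ hB).mp hblock

theorem posSemidef_sub_mul_inv_mul_conjTranspose {S : Matrix m m K} (hS : S.PosDef)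
    {A : Matrix m n K} (hA : IsUnit (Aᴴ * S⁻¹ * A)) :
    (S - A * (Aᴴ * S⁻¹ * A)⁻¹ * Aᴴ).PosSemidef := by
  have hG := hS.conjTranspose_mul_inv_mul_of_isUnit hA
  let _ := hS.isUnit.invertible
  let _ := hA.invertible
  have hblock : (fromBlocks S A Aᴴ (Aᴴ * S⁻¹ * A)).PosSemidef :=
    (fromBlocks₁₁ A _ hS).mpr (by rw [sub_self]; exact .zero)
  exact (fromBlocks₂₂ S A hG).mp hblock

end Matrix.PosDef

theorem sandwich_inv_gram_le_general {k r : ℕ}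
    (S : Matrix (Fin k) (Fin k) ℝ) (hS : S.PosDef)
    (A : Matrix (Fin k) (Fin r) ℝ) (hA : IsUnit (Aᵀ * S⁻¹ * A))
    (M : Matrix (Fin r) (Fin r) ℝ)
    (hMA : (M - Aᵀ * S⁻¹ * A).PosSemidef) :
    (A * (Aᵀ * S⁻¹ * A)⁻¹ * Aᵀ - A * M⁻¹ * Aᵀ).PosSemidef ∧
      (S - A * (Aᵀ * S⁻¹ * A)⁻¹ * Aᵀ).PosSemidef := by
  rw [← conjTranspose_eq_transpose_of_trivial A] at hA hMA ⊢
  have hG := hS.conjTranspose_mul_inv_mul_of_isUnit hA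
  refine ⟨?_, hS.posSemidef_sub_mul_inv_mul_conjTranspose hA⟩
  simpa only [Matrix.mul_sub, Matrix.sub_mul] using
    (hG.posSemidef_inv_sub_inv hMA).mul_mul_conjTranspose_same A

/-- Let `Σ` be a real symmetric positive definite `k×k` matrix, `A` a real `k×r` matrix
with `Aᵀ Σ⁻¹ A` invertible, and `M` a real symmetric positive definite `r×r` matrix with
`M ⪰ Aᵀ Σ⁻¹ A`. Then `A M⁻¹ Aᵀ ⪯ A (Aᵀ Σ⁻¹ A)⁻¹ Aᵀ ⪯ Σ`: both
`A (Aᵀ Σ⁻¹ A)⁻¹ Aᵀ - A M⁻¹ Aᵀ` and `Σ - A (Aᵀ Σ⁻¹ A)⁻¹ Aᵀ` are positive semidefinite. -/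
theorem sandwich_inv_gram_le {k r : ℕ}
    (S : Matrix (Fin k) (Fin k) ℝ) (hS : S.PosDef)
    (A : Matrix (Fin k) (Fin r) ℝ) (hA : IsUnit (Aᵀ * S⁻¹ * A))
    (M : Matrix (Fin r) (Fin r) ℝ) (hM : M.PosDef)
    (hMA : (M - Aᵀ * S⁻¹ * A).PosSemidef) :
    (A * (Aᵀ * S⁻¹ * A)⁻¹ * Aᵀ - A * M⁻¹ * Aᵀ).PosSemidef ∧
      (S - A * (Aᵀ * S⁻¹ * A)⁻¹ * Aᵀ).PosSemidef :=
  sandwich_inv_gram_le_general S hS A hA M hMA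
end
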